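/- arXiv:1305.4767 — 6 statements merged into one kernel-verified Lean document; each statement's English description precedes it below -/
import Mathlib

section
/- Let 0 < ε < 1/4, let D ⊆ ℝ be a nonempty finite set that is an ε-natural fragment up to a ∈ ℝ, and let f : ℝ → ℝ satisfy |f(d)| < ε for all d ∈ D. Then E := {d + f(d) : d ∈ D} is a 3ε-natural fragment up to a. -/
/-!
Distinct points of an `ε`-natural fragment are more than `1 - ε` apart, so moving each point by
less than `ε ≤ 1/3` preserves their order. Hence the successor of `d + f d` in the perturbed set
is `s + f s` for the successor `s` of `d`, and every quantity in the definition moves by less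
than `2 ε`.
-/

/-- `D` is an `ε`-natural fragment up to `a`: successors differ from steps of `1` by
less than `ε`, and `D` comes within `ε` of both `0` and `a`. -/
def IsENatFragment (ε a : ℝ) (D : Set ℝ) : Prop :=
  (∀ d ∈ D, (∃ e ∈ D, d < e) →
    ∀ s, IsLeast {e ∈ D | d < e} s → |s - d - 1| < ε) ∧
  (∃ d₀ ∈ D, |d₀| < ε) ∧ (∃ d₁ ∈ D, |d₁ - a| < ε)

theorem Set.Finite.exists_isLeast_gt {α : Type*} [LinearOrder α] {D : Set α} (hD : D.Finite)
    {d : α} (h : ∃ e ∈ D, d < e) : ∃ s, IsLeast {e ∈ D | d < e} s :=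
  let ⟨s, hs, hmin⟩ := Set.exists_min_image _ id (hD.subset fun _ he => he.1) h
  ⟨s, hs, hmin⟩

theorem StrictMonoOn.isLeast_image_gt {α β : Type*} [LinearOrder α] [LinearOrder β]
    {g : α → β} {D : Set α} (hg : StrictMonoOn g D) {d s : α} (hd : d ∈ D)
    (hs : IsLeast {e ∈ D | d < e} s) : IsLeast {e ∈ g '' D | g d < e} (g s) := by
  refine ⟨⟨⟨s, hs.1.1, rfl⟩, hg hd hs.1.1 hs.1.2⟩, ?_⟩
  rintro _ ⟨⟨u, hu, rfl⟩, hlt⟩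
  exact hg.monotoneOn hs.1.1 hu (hs.2 ⟨hu, (hg.lt_iff_lt hd hu).1 hlt⟩)

theorem IsENatFragment.one_sub_lt_sub {ε a : ℝ} {D : Set ℝ} (hD : IsENatFragment ε a D)
    (hfin : D.Finite) {d d' : ℝ} (hd : d ∈ D) (hd' : d' ∈ D) (hlt : d < d') :
    1 - ε < d' - d := by
  obtain ⟨s, hs⟩ := hfin.exists_isLeast_gt ⟨d', hd', hlt⟩
  have hstep := abs_lt.mp (hD.1 d hd ⟨d', hd', hlt⟩ s hs)
  have hsd' : s ≤ d' := hs.2 ⟨hd', hlt⟩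
  linarith

theorem strictMonoOn_add_of_one_sub_lt_sub {ε : ℝ} {D : Set ℝ} {f : ℝ → ℝ} (hε : 3 * ε ≤ 1)
    (hgap : ∀ d ∈ D, ∀ d' ∈ D, d < d' → 1 - ε < d' - d) (hf : ∀ d ∈ D, |f d| < ε) :
    StrictMonoOn (fun d => d + f d) D := by
  intro d hd d' hd' hlt
  have := hgap d hd d' hd' hlt
  have := abs_lt.mp (hf d hd)
  have := abs_lt.mp (hf d' hd')
  dsimp only
  linarith

theorem perturbed_eNatFragment_general (ε a : ℝ) (D : Set ℝ) (f : ℝ → ℝ)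
    (hε4 : ε < 1/4) (hfin : D.Finite)
    (hD : IsENatFragment ε a D) (hf : ∀ d ∈ D, |f d| < ε) :
    IsENatFragment (3 * ε) a ((fun d => d + f d) '' D) := by
  have hmono : StrictMonoOn (fun d => d + f d) D :=
    strictMonoOn_add_of_one_sub_lt_sub (by linarith)
      (fun d hd d' hd' => hD.one_sub_lt_sub hfin hd hd') hf
  obtain ⟨hstep, ⟨d₀, hd₀, h₀⟩, ⟨d₁, hd₁, h₁⟩⟩ := hD
  refine ⟨?_, ⟨_, ⟨d₀, hd₀, rfl⟩, ?_⟩, ⟨_, ⟨d₁, hd₁, rfl⟩, ?_⟩⟩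
  · rintro _ ⟨d, hd, rfl⟩ ⟨_, ⟨d', hd', rfl⟩, hlt⟩ _ hs
    have hdd' : d < d' := (hmono.lt_iff_lt hd hd').1 hlt
    obtain ⟨t, ht⟩ := hfin.exists_isLeast_gt ⟨d', hd', hdd'⟩
    obtain rfl := hs.unique (hmono.isLeast_image_gt hd ht)
    calc |t + f t - (d + f d) - 1| = |(t - d - 1) + f t + -f d| := by ring_nf
      _ ≤ |t - d - 1| + |f t| + |-f d| := abs_add_three _ _ _
      _ < ε + ε + ε := by
        rw [abs_neg]
        gcongr
        exacts [hstep d hd ⟨d', hd', hdd'⟩ t ht, hf t ht.1.1, hf d hd]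
      _ = 3 * ε := by ring
  · calc |d₀ + f d₀| ≤ |d₀| + |f d₀| := abs_add_le _ _
      _ < 3 * ε := by linarith [hf d₀ hd₀, abs_nonneg d₀]
  · calc |d₁ + f d₁ - a| = |(d₁ - a) + f d₁| := by ring_nf
      _ ≤ |d₁ - a| + |f d₁| := abs_add_le _ _
      _ < 3 * ε := by linarith [hf d₁ hd₁, abs_nonneg (d₁ - a)]

theorem perturbed_eNatFragment (ε a : ℝ) (D : Set ℝ) (f : ℝ → ℝ)
    (hε : 0 < ε) (hε4 : ε < 1/4) (hfin : D.Finite) (hne : D.Nonempty)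
    (hD : IsENatFragment ε a D) (hf : ∀ d ∈ D, |f d| < ε) :
    IsENatFragment (3 * ε) a ((fun d => d + f d) '' D) :=
  perturbed_eNatFragment_general ε a D f hε4 hfin hD hf
end

section
/- Let D ⊆ [0,∞) be closed and discrete, f : D → ℝ a function with dense image, a ∈ ℝ with a ∉ f(D), and d ∈ D. Then for every b in the open interval (l_{a,d}, r_{a,d}) one has L_{b,d} = L_{a,d} and R_{b,d} = R_{a,d}. -/
/-- Best approximations of `c` from the left among elements of `D` (w.r.t. `f`). -/
def leftApprox (D : Set ℝ) (f : ℝ → ℝ) (c : ℝ) : Set ℝ :=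
  {e ∈ D | f e < c ∧ ∀ e' ∈ D, e' < e → ¬ (f e < f e' ∧ f e' < c)}

/-- Best approximations of `c` from the right among elements of `D` (w.r.t. `f`). -/
def rightApprox (D : Set ℝ) (f : ℝ → ℝ) (c : ℝ) : Set ℝ :=
  {e ∈ D | c < f e ∧ ∀ e' ∈ D, e' < e → ¬ (c < f e' ∧ f e' < f e)}

/-- Best approximations from the left below `d`. -/
def leftApproxUpTo (D : Set ℝ) (f : ℝ → ℝ) (c d : ℝ) : Set ℝ :=
  leftApprox D f c ∩ Set.Icc 0 d

/-- Best approximations from the right below `d`. -/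
def rightApproxUpTo (D : Set ℝ) (f : ℝ → ℝ) (c d : ℝ) : Set ℝ :=
  rightApprox D f c ∩ Set.Icc 0 d

/-- In a closed discrete set, any nonempty bounded-below subset has a minimum. -/
lemma exists_min_of_discrete (D : Set ℝ) (hclosed : IsClosed D)
    (hdisc : ∀ x ∈ D, ∃ ε > (0:ℝ), ∀ y ∈ D, |y - x| < ε → y = x)
    (T : Set ℝ) (hT : T ⊆ D) (hbdd : BddBelow T) (hne : T.Nonempty) :
    ∃ s ∈ T, ∀ x ∈ T, s ≤ x := by
  set s := sInf T with hs
  have hsD : s ∈ D := by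
    have h1 : s ∈ closure T := csInf_mem_closure hne hbdd
    have h2 : closure T ⊆ D := hclosed.closure_eq ▸ closure_mono hT
    exact h2 h1
  obtain ⟨ε, hε, hsep⟩ := hdisc s hsD
  obtain ⟨t, htT, htlt⟩ : ∃ t ∈ T, t < s + ε := by
    obtain ⟨t, htT, htlt⟩ := exists_lt_of_csInf_lt hne (by linarith : sInf T < s + ε)
    exact ⟨t, htT, htlt⟩
  have hst : s ≤ t := csInf_le hbdd htT
  have : t = s := hsep t (hT htT) (by rw [abs_lt]; constructor <;> linarith)
  exact ⟨s, this ▸ htT, fun x hx => csInf_le hbdd hx⟩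

lemma key_gap (D : Set ℝ) (f : ℝ → ℝ) (a d : ℝ)
    (hD : D ⊆ Set.Ici 0) (hclosed : IsClosed D)
    (hdisc : ∀ x ∈ D, ∃ ε > (0:ℝ), ∀ y ∈ D, |y - x| < ε → y = x)
    (ha : a ∉ f '' D) (mL mR : ℝ)
    (hmL : IsGreatest (leftApproxUpTo D f a d) mL)
    (hmR : IsGreatest (rightApproxUpTo D f a d) mR) :
    ∀ e ∈ D, e ∈ Set.Icc 0 d → f e ≤ f mL ∨ f mR ≤ f e := by
  intro e heD heI
  by_contra h
  push_neg at h
  obtain ⟨h1, h2⟩ := h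
  have hea : f e ≠ a := fun h => ha ⟨e, heD, h⟩
  obtain ⟨⟨hmLD, hfmL, hcondL⟩, hmLI⟩ := hmL.1
  obtain ⟨⟨hmRD, hfmR, hcondR⟩, hmRI⟩ := hmR.1
  rcases lt_or_gt_of_ne hea with hlt | hgt
  · -- f e < a : consider minimal x with f mL < f x < a
    set T := {x | x ∈ D ∧ x ∈ Set.Icc 0 d ∧ f mL < f x ∧ f x < a} with hT
    obtain ⟨s, hsT, hsmin⟩ := exists_min_of_discrete D hclosed hdisc T
      (fun x hx => hx.1) ⟨0, fun x hx => hx.2.1.1⟩ ⟨e, heD, heI, h1, hlt⟩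
    obtain ⟨hsD, hsI, hsL, hsa⟩ := hsT
    have hsApprox : s ∈ leftApproxUpTo D f a d := by
      refine ⟨⟨hsD, hsa, fun e' he'D he's hcon => ?_⟩, hsI⟩
      have : e' ∈ T := ⟨he'D, ⟨hD he'D, le_trans (le_of_lt he's) hsI.2⟩,
        lt_trans hsL hcon.1, hcon.2⟩
      exact absurd (hsmin e' this) (not_le.mpr he's)
    have hsle : s ≤ mL := hmL.2 hsApprox
    rcases eq_or_lt_of_le hsle with heq | hltm
    · rw [heq] at hsL; exact lt_irrefl _ hsL
    · exact hcondL s hsD hltm ⟨hsL, hsa⟩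
  · -- a < f e : consider minimal x with a < f x < f mR
    set T := {x | x ∈ D ∧ x ∈ Set.Icc 0 d ∧ a < f x ∧ f x < f mR} with hT
    obtain ⟨s, hsT, hsmin⟩ := exists_min_of_discrete D hclosed hdisc T
      (fun x hx => hx.1) ⟨0, fun x hx => hx.2.1.1⟩ ⟨e, heD, heI, hgt, h2⟩
    obtain ⟨hsD, hsI, hsa, hsR⟩ := hsT
    have hsApprox : s ∈ rightApproxUpTo D f a d := by
      refine ⟨⟨hsD, hsa, fun e' he'D he's hcon => ?_⟩, hsI⟩
      have : e' ∈ T := ⟨he'D, ⟨hD he'D, le_trans (le_of_lt he's) hsI.2⟩,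
        hcon.1, lt_trans hcon.2 hsR⟩
      exact absurd (hsmin e' this) (not_le.mpr he's)
    have hsle : s ≤ mR := hmR.2 hsApprox
    rcases eq_or_lt_of_le hsle with heq | hltm
    · rw [heq] at hsR; exact lt_irrefl _ hsR
    · exact hcondR s hsD hltm ⟨hsa, hsR⟩

theorem sameApprox (D : Set ℝ) (f : ℝ → ℝ) (a d : ℝ)
    (hD : D ⊆ Set.Ici 0) (hclosed : IsClosed D)
    (hdisc : ∀ x ∈ D, ∃ ε > (0:ℝ), ∀ y ∈ D, |y - x| < ε → y = x)
    (hdense : Dense (f '' D)) (ha : a ∉ f '' D) (hd : d ∈ D)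
    (mL mR : ℝ)
    (hmL : IsGreatest (leftApproxUpTo D f a d) mL)
    (hmR : IsGreatest (rightApproxUpTo D f a d) mR) :
    ∀ b ∈ Set.Ioo (f mL) (f mR),
      leftApproxUpTo D f b d = leftApproxUpTo D f a d ∧
      rightApproxUpTo D f b d = rightApproxUpTo D f a d := by
  intro b hb
  obtain ⟨hbL, hbR⟩ := hb
  have key := key_gap D f a d hD hclosed hdisc ha mL mR hmL hmR
  have hmLa : f mL < a := hmL.1.1.2.1
  have hamR : a < f mR := hmR.1.1.2.1
  constructor
  · ext e
    constructor
    · rintro ⟨⟨heD, hfe, hcond⟩, heI⟩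
      have hkey := key e heD heI
      have hfeL : f e ≤ f mL := by
        rcases hkey with h | h
        · exact h
        · linarith
      refine ⟨⟨heD, by linarith, fun e' he'D he'e hcon => ?_⟩, heI⟩
      have he'I : e' ∈ Set.Icc 0 d := ⟨hD he'D, le_trans (le_of_lt he'e) heI.2⟩
      have hkey' := key e' he'D he'I
      have : f e' ≤ f mL := by
        rcases hkey' with h | h
        · exact h
        · linarith [hcon.2]
      exact hcond e' he'D he'e ⟨hcon.1, by linarith⟩
    · rintro ⟨⟨heD, hfe, hcond⟩, heI⟩
      have hkey := key e heD heI
      have hfeL : f e ≤ f mL := by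
        rcases hkey with h | h
        · exact h
        · linarith
      refine ⟨⟨heD, by linarith, fun e' he'D he'e hcon => ?_⟩, heI⟩
      have he'I : e' ∈ Set.Icc 0 d := ⟨hD he'D, le_trans (le_of_lt he'e) heI.2⟩
      have hkey' := key e' he'D he'I
      have : f e' ≤ f mL := by
        rcases hkey' with h | h
        · exact h
        · linarith [hcon.2]
      exact hcond e' he'D he'e ⟨hcon.1, by linarith⟩
  · ext e
    constructor
    · rintro ⟨⟨heD, hfe, hcond⟩, heI⟩
      have hkey := key e heD heI
      have hfeR : f mR ≤ f e := by
        rcases hkey with h | h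
        · linarith
        · exact h
      refine ⟨⟨heD, by linarith, fun e' he'D he'e hcon => ?_⟩, heI⟩
      have he'I : e' ∈ Set.Icc 0 d := ⟨hD he'D, le_trans (le_of_lt he'e) heI.2⟩
      have hkey' := key e' he'D he'I
      have : f mR ≤ f e' := by
        rcases hkey' with h | h
        · linarith [hcon.1]
        · exact h
      exact hcond e' he'D he'e ⟨by linarith, hcon.2⟩
    · rintro ⟨⟨heD, hfe, hcond⟩, heI⟩
      have hkey := key e heD heI
      have hfeR : f mR ≤ f e := by
        rcases hkey with h | h
        · linarith
        · exact h
      refine ⟨⟨heD, by linarith, fun e' he'D he'e hcon => ?_⟩, heI⟩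
      have he'I : e' ∈ Set.Icc 0 d := ⟨hD he'D, le_trans (le_of_lt he'e) heI.2⟩
      have hkey' := key e' he'D he'I
      have : f mR ≤ f e' := by
        rcases hkey' with h | h
        · linarith [hcon.1]
        · exact h
      exact hcond e' he'D he'e ⟨by linarith, hcon.2⟩
end

section
/- Let f : ℝ → ℝ be continuous. Suppose the upper right Dini derivative Λ⁺f(x) := limsup_{y→x⁺} (f(y) − f(x))/(y − x) is finite for every x ∈ ℝ and the function x ↦ Λ⁺f(x) is continuous. Then f is continuously differentiable and f' = Λ⁺f. -/
open Filter

/-- Upper mean value inequality from the upper right Dini derivative. -/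
lemma dini_upper_mvt (f g : ℝ → ℝ) (hf : Continuous f)
    (hdini : ∀ x : ℝ,
      limsup (fun y => (((f y - f x) / (y - x) : ℝ) : EReal)) (nhdsWithin x (Set.Ioi x))
        = ((g x : ℝ) : EReal))
    (a b M : ℝ) (hab : a ≤ b) (hM : ∀ x ∈ Set.Ico a b, g x < M) :
    f b - f a ≤ M * (b - a) := by
  set S : Set ℝ := {y ∈ Set.Icc a b | f y - f a ≤ M * (y - a)} with hS
  have hSsub : S ⊆ Set.Icc a b := fun y hy => hy.1
  have hSclosed : IsClosed S := by
    apply IsClosed.inter isClosed_Icc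
    exact isClosed_le ((hf.sub continuous_const)) (continuous_const.mul ((continuous_id.sub continuous_const)))
  have hSne : S.Nonempty := ⟨a, ⟨le_refl a, hab⟩, by simp⟩
  have hScomp : IsCompact S := IsCompact.of_isClosed_subset isCompact_Icc hSclosed hSsub
  have hSbdd : BddAbove S := hScomp.bddAbove
  set c := sSup S with hc
  have hcS : c ∈ S := hScomp.sSup_mem hSne
  rcases eq_or_lt_of_le hcS.1.2 with hcb | hcb
  · have := hcS.2
    rwa [hcb] at this
  · exfalso
    have hgc : g c < M := hM c ⟨hcS.1.1, hcb⟩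
    have hls : limsup (fun y => (((f y - f c) / (y - c) : ℝ) : EReal))
        (nhdsWithin c (Set.Ioi c)) < ((M : ℝ) : EReal) := by
      rw [hdini c]; exact_mod_cast hgc
    have hev : ∀ᶠ y in nhdsWithin c (Set.Ioi c),
        (((f y - f c) / (y - c) : ℝ) : EReal) < ((M : ℝ) : EReal) :=
      eventually_lt_of_limsup_lt hls
    have hIoo : Set.Ioo c b ∈ nhdsWithin c (Set.Ioi c) :=
      Ioo_mem_nhdsGT_of_mem ⟨le_refl c, hcb⟩
    have : ∃ y ∈ Set.Ioo c b,
        (((f y - f c) / (y - c) : ℝ) : EReal) < ((M : ℝ) : EReal) := by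
      have := hev.and (eventually_of_mem hIoo (fun y hy => hy))
      rcases this.exists with ⟨y, h1, h2⟩
      exact ⟨y, h2, h1⟩
    rcases this with ⟨y, hy, hlt⟩
    have hlt' : (f y - f c) / (y - c) < M := by exact_mod_cast hlt
    have hyc : 0 < y - c := by linarith [hy.1]
    have h1 : f y - f c < M * (y - c) := by
      rwa [div_lt_iff₀ hyc] at hlt'
    have hyS : y ∈ S := by
      refine ⟨⟨le_trans hcS.1.1 (le_of_lt hy.1), le_of_lt hy.2⟩, ?_⟩
      have := hcS.2
      nlinarith
    have : y ≤ c := le_csSup hSbdd hyS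
    linarith [hy.1]

/-- Lower mean value inequality from the upper right Dini derivative. -/
lemma dini_lower_mvt (f g : ℝ → ℝ) (hf : Continuous f)
    (hdini : ∀ x : ℝ,
      limsup (fun y => (((f y - f x) / (y - x) : ℝ) : EReal)) (nhdsWithin x (Set.Ioi x))
        = ((g x : ℝ) : EReal))
    (a b m : ℝ) (hab : a ≤ b) (hm : ∀ x ∈ Set.Ico a b, m < g x) :
    m * (b - a) ≤ f b - f a := by
  set S : Set ℝ := {y ∈ Set.Icc a b | m * (y - a) ≤ f y - f a} with hS
  have hSsub : S ⊆ Set.Icc a b := fun y hy => hy.1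
  have hSclosed : IsClosed S := by
    apply IsClosed.inter isClosed_Icc
    exact isClosed_le (continuous_const.mul ((continuous_id.sub continuous_const))) ((hf.sub continuous_const))
  have hSne : S.Nonempty := ⟨a, ⟨le_refl a, hab⟩, by simp⟩
  have hScomp : IsCompact S := IsCompact.of_isClosed_subset isCompact_Icc hSclosed hSsub
  have hSbdd : BddAbove S := hScomp.bddAbove
  set c := sSup S with hc
  have hcS : c ∈ S := hScomp.sSup_mem hSne
  rcases eq_or_lt_of_le hcS.1.2 with hcb | hcb
  · have := hcS.2
    rwa [hcb] at this
  · exfalso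
    have hgc : m < g c := hm c ⟨hcS.1.1, hcb⟩
    have hls : ((m : ℝ) : EReal) < limsup (fun y => (((f y - f c) / (y - c) : ℝ) : EReal))
        (nhdsWithin c (Set.Ioi c)) := by
      rw [hdini c]; exact_mod_cast hgc
    have hfr : ∃ᶠ y in nhdsWithin c (Set.Ioi c),
        ((m : ℝ) : EReal) < (((f y - f c) / (y - c) : ℝ) : EReal) :=
      frequently_lt_of_lt_limsup (by isBoundedDefault) hls
    have hIoo : Set.Ioo c b ∈ nhdsWithin c (Set.Ioi c) :=
      Ioo_mem_nhdsGT_of_mem ⟨le_refl c, hcb⟩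
    have : ∃ y ∈ Set.Ioo c b,
        ((m : ℝ) : EReal) < (((f y - f c) / (y - c) : ℝ) : EReal) := by
      have := (hfr.and_eventually (eventually_of_mem hIoo (fun y hy => hy)))
      rcases this.exists with ⟨y, h1, h2⟩
      exact ⟨y, h2, h1⟩
    rcases this with ⟨y, hy, hlt⟩
    have hlt' : m < (f y - f c) / (y - c) := by exact_mod_cast hlt
    have hyc : 0 < y - c := by linarith [hy.1]
    have h1 : m * (y - c) < f y - f c := by
      rwa [lt_div_iff₀ hyc] at hlt'
    have hyS : y ∈ S := by
      refine ⟨⟨le_trans hcS.1.1 (le_of_lt hy.1), le_of_lt hy.2⟩, ?_⟩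
      have := hcS.2
      nlinarith
    have : y ≤ c := le_csSup hSbdd hyS
    linarith [hy.1]

theorem dini_continuous_implies_C1 (f g : ℝ → ℝ)
    (hf : Continuous f) (hg : Continuous g)
    (hdini : ∀ x : ℝ,
      limsup (fun y => (((f y - f x) / (y - x) : ℝ) : EReal)) (nhdsWithin x (Set.Ioi x))
        = ((g x : ℝ) : EReal)) :
    ∀ x : ℝ, HasDerivAt f (g x) x := by
  intro x
  rw [hasDerivAt_iff_tendsto_slope]
  rw [Metric.tendsto_nhds]
  intro ε hε
  have hgx : ContinuousAt g x := hg.continuousAt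
  rw [Metric.continuousAt_iff] at hgx
  rcases hgx (ε / 2) (by linarith) with ⟨δ, hδ, hδg⟩
  have key : ∀ y : ℝ, y ≠ x → |y - x| < δ → dist (slope f x y) (g x) < ε := by
    intro y hyx hyδ
    have hginterval : ∀ z, |z - x| < δ → g x - ε / 2 < g z ∧ g z < g x + ε / 2 := by
      intro z hz
      have := hδg (show dist z x < δ by rwa [Real.dist_eq])
      rw [Real.dist_eq] at this
      constructor <;> [linarith [abs_lt.mp this] ; linarith [abs_lt.mp this]]
    rcases lt_or_gt_of_ne hyx with hlt | hgt
    · -- y < x : apply MVT on [y, x]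
      have hsub : ∀ z ∈ Set.Ico y x, |z - x| < δ := by
        intro z hz
        rw [abs_sub_lt_iff]
        rw [abs_sub_lt_iff] at hyδ
        constructor <;> [linarith [hz.2] ; linarith [hz.1]]
      have hup := dini_upper_mvt f g hf hdini y x (g x + ε / 2) (le_of_lt hlt)
        (fun z hz => (hginterval z (hsub z hz)).2)
      have hlow := dini_lower_mvt f g hf hdini y x (g x - ε / 2) (le_of_lt hlt)
        (fun z hz => (hginterval z (hsub z hz)).1)
      have hxy : 0 < x - y := by linarith
      rw [slope_def_field, Real.dist_eq]
      have heq : (f y - f x) / (y - x) = (f x - f y) / (x - y) := by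
        rw [div_eq_div_iff (by linarith) (by linarith)]; ring
      rw [heq, abs_lt]
      have h1 : (f x - f y) / (x - y) ≤ g x + ε / 2 := by
        rw [div_le_iff₀ hxy]; linarith
      have h2 : g x - ε / 2 ≤ (f x - f y) / (x - y) := by
        rw [le_div_iff₀ hxy]; linarith
      constructor <;> linarith
    · -- y > x : apply MVT on [x, y]
      have hsub : ∀ z ∈ Set.Ico x y, |z - x| < δ := by
        intro z hz
        rw [abs_sub_lt_iff]
        rw [abs_sub_lt_iff] at hyδ
        constructor <;> [linarith [hz.2] ; linarith [hz.1]]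
      have hup := dini_upper_mvt f g hf hdini x y (g x + ε / 2) (le_of_lt hgt)
        (fun z hz => (hginterval z (hsub z hz)).2)
      have hlow := dini_lower_mvt f g hf hdini x y (g x - ε / 2) (le_of_lt hgt)
        (fun z hz => (hginterval z (hsub z hz)).1)
      have hxy : 0 < y - x := by linarith
      rw [slope_def_field, Real.dist_eq, abs_lt]
      have h1 : (f y - f x) / (y - x) ≤ g x + ε / 2 := by
        rw [div_le_iff₀ hxy]; linarith
      have h2 : g x - ε / 2 ≤ (f y - f x) / (y - x) := by
        rw [le_div_iff₀ hxy]; linarith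
      constructor <;> linarith
  have hmem : {y : ℝ | |y - x| < δ} ∈ nhdsWithin x {x}ᶜ := by
    apply nhdsWithin_le_nhds
    have h := Metric.ball_mem_nhds x hδ
    simpa [Metric.ball, Real.dist_eq] using h
  filter_upwards [hmem, self_mem_nhdsWithin] with y hy hyne
  exact key y hyne hy
end

section
/- (Riesz's Rising Sun Lemma for bounded, possibly discontinuous functions.) Let a < b in ℝ and g : [a,b] → ℝ be bounded. For x ∈ [a,b] define G(x) := max(g(x), limsup_{y→x} g(y)). Let E := {x ∈ (a,b) : ∃ y ∈ (x, b], g(y) > G(x)}. Then E is an open subset of (a,b); moreover, if (a', b') is a maximal open subinterval of E, then limsup_{y→a'⁺} g(y) ≤ G(b'). -/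
open Filter

/-- `G x = max (g x, limsup_{y → x, y ∈ [a,b], y ≠ x} g y)`. -/
noncomputable def risingSunG (a b : ℝ) (g : ℝ → ℝ) (x : ℝ) : ℝ :=
  max (g x) (limsup g (nhdsWithin x (Set.Icc a b \ {x})))

/-- `E = {x ∈ (a,b) : ∃ y ∈ (x, b], g y > G x}`. -/
def risingSunE (a b : ℝ) (g : ℝ → ℝ) : Set ℝ :=
  {x ∈ Set.Ioo a b | ∃ y ∈ Set.Ioc x b, g y > risingSunG a b g x}

private lemma rs_neBot {a b z : ℝ} (hab : a < b) (hz : z ∈ Set.Icc a b) :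
    (nhdsWithin z (Set.Icc a b \ {z})).NeBot := by
  rcases lt_or_eq_of_le hz.2 with h | h
  · have hs : Set.Ioo z b ⊆ Set.Icc a b \ {z} := fun w hw =>
      ⟨⟨hz.1.trans hw.1.le, hw.2.le⟩, ne_of_gt hw.1⟩
    exact (mem_closure_iff_nhdsWithin_neBot.mp (by
      rw [closure_Ioo (ne_of_lt h)]; exact ⟨le_rfl, h.le⟩)).mono
      (nhdsWithin_mono _ hs)
  · subst h
    have hs : Set.Ioo a z ⊆ Set.Icc a z \ {z} := fun w hw =>
      ⟨⟨hw.1.le, hw.2.le⟩, ne_of_lt hw.2⟩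
    exact (mem_closure_iff_nhdsWithin_neBot.mp (by
      rw [closure_Ioo (ne_of_lt hab)]; exact ⟨hab.le, le_rfl⟩)).mono
      (nhdsWithin_mono _ hs)

theorem rising_sun_lemma (a b : ℝ) (hab : a < b) (g : ℝ → ℝ)
    (hbdd : ∃ M : ℝ, ∀ x ∈ Set.Icc a b, |g x| ≤ M) :
    IsOpen (risingSunE a b g) ∧
    ∀ a' b' : ℝ, a' < b' →
      Set.Ioo a' b' ⊆ risingSunE a b g →
      a' ∉ risingSunE a b g → b' ∉ risingSunE a b g →
      limsup g (nhdsWithin a' (Set.Ioi a')) ≤ risingSunG a b g b' := by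
  obtain ⟨M, hM⟩ := hbdd
  have hbddle : ∀ z : ℝ, IsBoundedUnder (· ≤ ·) (nhdsWithin z (Set.Icc a b \ {z})) g :=
    fun z => ⟨M, Filter.eventually_map.mpr <| by filter_upwards [self_mem_nhdsWithin] with w hw using (abs_le.mp (hM w hw.1)).2⟩
  have hbddge : ∀ z : ℝ, IsBoundedUnder (· ≥ ·) (nhdsWithin z (Set.Icc a b \ {z})) g :=
    fun z => ⟨-M, Filter.eventually_map.mpr <| by filter_upwards [self_mem_nhdsWithin] with w hw using (abs_le.mp (hM w hw.1)).1⟩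
  constructor
  · -- openness
    rw [Metric.isOpen_iff]
    rintro x ⟨hxab, y, hy, hgy⟩
    obtain ⟨c, hc1, hc2⟩ := exists_between hgy
    have hgxc : g x < c := lt_of_le_of_lt (le_max_left _ _) hc1
    have hev : ∀ᶠ w in nhdsWithin x (Set.Icc a b \ {x}), g w < c :=
      eventually_lt_of_limsup_lt (lt_of_le_of_lt (le_max_right (g x) _) hc1) (hbddle x)
    rw [eventually_nhdsWithin_iff] at hev
    have hev2 : ∀ᶠ w in nhds x, (w ∈ Set.Icc a b → g w < c) ∧ w ∈ Set.Ioo a b ∧ w < y := by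
      filter_upwards [hev, (isOpen_Ioo.eventually_mem hxab),
        (isOpen_Iio.eventually_mem (show x ∈ Set.Iio y from hy.1))] with w h1 h2 h3
      refine ⟨fun hw => ?_, h2, h3⟩
      by_cases hwx : w = x
      · subst hwx; exact hgxc
      · exact h1 ⟨hw, hwx⟩
    obtain ⟨δ, hδpos, hball⟩ := Metric.eventually_nhds_iff_ball.mp hev2
    refine ⟨δ, hδpos, ?_⟩
    intro x' hx'
    obtain ⟨h1, h2, h3⟩ := hball x' hx'
    haveI := rs_neBot hab (Set.mem_Icc_of_Ioo h2)
    have hls : limsup g (nhdsWithin x' (Set.Icc a b \ {x'})) ≤ c := by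
      apply limsup_le_of_le ((hbddge x').isCoboundedUnder_le)
      have hball' : ∀ᶠ w in nhdsWithin x' (Set.Icc a b \ {x'}), w ∈ Metric.ball x δ :=
        eventually_nhdsWithin_of_eventually_nhds
          (Metric.isOpen_ball.eventually_mem hx')
      filter_upwards [hball', self_mem_nhdsWithin] with w hw hw'
      rcases hball w hw with ⟨k1, _, _⟩
      by_cases hwx : w = x
      · subst hwx; exact hgxc.le
      · exact (k1 hw'.1).le
    refine ⟨h2, y, ⟨h3, hy.2⟩, ?_⟩
    exact max_lt (lt_trans (h1 (Set.mem_Icc_of_Ioo h2)) hc2) (lt_of_le_of_lt hls hc2)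
  · -- the rising sun inequality
    intro a' b' hab' hsub ha' hb'
    have haa' : a ≤ a' := by
      by_contra h
      push_neg at h
      have hmin : a' < min a b' := lt_min h hab'
      have hz : (a' + min a b') / 2 ∈ Set.Ioo a' b' :=
        ⟨by linarith, by have := min_le_right a b'; linarith⟩
      have := (hsub hz).1.1
      have := min_le_left a b'
      linarith
    have hb'b : b' ≤ b := by
      by_contra h
      push_neg at h
      have hmax : max b a' < b' := max_lt h hab'
      have hz : (max b a' + b') / 2 ∈ Set.Ioo a' b' :=
        ⟨by have := le_max_right b a'; linarith, by linarith⟩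
      have := (hsub hz).1.2
      have := le_max_left b a'
      linarith
    have hclaim : ∀ x ∈ Set.Ioo a' b', risingSunG a b g x ≤ risingSunG a b g b' := by
      intro x hx
      by_contra hcon
      push_neg at hcon
      set A := risingSunG a b g x with hA
      set S : Set ℝ := {z ∈ Set.Icc x b' | A ≤ risingSunG a b g z} with hS
      have hxS : x ∈ S := ⟨⟨le_rfl, hx.2.le⟩, le_rfl⟩
      have hSbdd : BddAbove S := ⟨b', fun z hz => hz.1.2⟩
      set c := sSup S with hc
      have hxc : x ≤ c := le_csSup hSbdd hxS
      have hcb' : c ≤ b' := csSup_le ⟨x, hxS⟩ fun z hz => hz.1.2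
      have hxab : x ∈ Set.Ioo a b := (hsub hx).1
      have hcIcc : c ∈ Set.Icc a b := ⟨hxab.1.le.trans hxc, hcb'.trans hb'b⟩
      have hGc : A ≤ risingSunG a b g c := by
        by_cases hcS : c ∈ S
        · exact hcS.2
        · have hfr : ∀ ε : ℝ, 0 < ε →
              A - ε ≤ limsup g (nhdsWithin c (Set.Icc a b \ {c})) := by
            intro ε hε
            haveI := rs_neBot hab hcIcc
            refine le_limsup_of_frequently_le ?_ (hbddle c)
            rw [Filter.frequently_iff]
            intro U hU
            obtain ⟨V, hVopen, hcV, hVU⟩ := mem_nhdsWithin.mp hU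
            obtain ⟨δ, hδpos, hδ⟩ := Metric.isOpen_iff.mp hVopen c hcV
            obtain ⟨z, hzS, hzgt⟩ := exists_lt_of_lt_csSup ⟨x, hxS⟩
              (show c - δ / 2 < sSup S from by rw [← hc]; linarith)
            have hzc : z ≤ c := le_csSup hSbdd hzS
            have hzne : z ≠ c := fun h => hcS (h ▸ hzS)
            have hzball : z ∈ Metric.ball c δ := by
              rw [Metric.mem_ball, Real.dist_eq, abs_lt]; constructor <;> linarith
            have hzIcc : z ∈ Set.Icc a b :=
              ⟨hxab.1.le.trans hzS.1.1, hzS.1.2.trans hb'b⟩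
            by_cases hgz : A ≤ g z
            · exact ⟨z, hVU ⟨hδ hzball, hzIcc, hzne⟩, by linarith⟩
            · push_neg at hgz
              have hls : A ≤ limsup g (nhdsWithin z (Set.Icc a b \ {z})) := by
                have h2 := hzS.2
                rw [risingSunG, le_max_iff] at h2
                exact h2.resolve_left (not_le.mpr hgz)
              haveI := rs_neBot hab hzIcc
              have hfr2 : ∃ᶠ w in nhdsWithin z (Set.Icc a b \ {z}), A - ε < g w :=
                frequently_lt_of_lt_limsup ((hbddge z).isCoboundedUnder_le)
                  (lt_of_lt_of_le (by linarith) hls)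
              have hev2 : ∀ᶠ w in nhdsWithin z (Set.Icc a b \ {z}),
                  (w ∈ Metric.ball c δ ∧ w ≠ c) ∧ w ∈ Set.Icc a b \ {z} := by
                refine Filter.Eventually.and ?_ self_mem_nhdsWithin
                exact eventually_nhdsWithin_of_eventually_nhds
                  ((Metric.isOpen_ball.inter isOpen_compl_singleton).eventually_mem
                    ⟨hzball, hzne⟩)
              obtain ⟨w, hw1, ⟨hwball, hwne⟩, hwIcc, -⟩ := (hfr2.and_eventually hev2).exists
              exact ⟨w, hVU ⟨hδ hwball, hwIcc, hwne⟩, hw1.le⟩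
          have : A ≤ limsup g (nhdsWithin c (Set.Icc a b \ {c})) :=
            le_of_forall_sub_le fun ε hε => hfr ε hε
          exact this.trans (le_max_right _ _)
      rcases lt_or_eq_of_le hcb' with hlt | heq
      · obtain ⟨-, y, hy, hgy⟩ := hsub ⟨lt_of_lt_of_le hx.1 hxc, hlt⟩
        have hAy : A < g y := lt_of_le_of_lt hGc hgy
        by_cases hyb' : y ≤ b'
        · have hyS : y ∈ S := ⟨⟨hxc.trans hy.1.le, hyb'⟩,
            hAy.le.trans (le_max_left _ _)⟩
          exact absurd (le_csSup hSbdd hyS) (not_le.mpr hy.1)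
        · push_neg at hyb'
          have hb'ab : b' ∈ Set.Ioo a b := ⟨hxab.1.trans hx.2, hyb'.trans_le hy.2⟩
          exact hb' ⟨hb'ab, y, ⟨hyb', hy.2⟩, lt_trans hcon hAy⟩
      · rw [heq] at hGc
        exact absurd (lt_of_lt_of_le hcon hGc) (lt_irrefl _)
    have hsubIcc : Set.Ioo a' b' ⊆ Set.Icc a b := fun w hw =>
      ⟨haa'.trans hw.1.le, hw.2.le.trans hb'b⟩
    apply limsup_le_of_le
    · exact Filter.isCoboundedUnder_le_of_eventually_le _ (by
        filter_upwards [Ioo_mem_nhdsGT hab'] with w hw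
        exact (abs_le.mp (hM w (hsubIcc hw))).1)
    · filter_upwards [Ioo_mem_nhdsGT hab'] with w hw
      exact (le_max_left _ _).trans (hclaim w hw)
end

section
/- Let f : ℝ → ℝ be continuous and weakly increasing. Then the set A := {x ∈ ℝ : λ⁻f(x) < Λ⁺f(x)} has Lebesgue measure zero, where λ⁻f(x) := liminf_{h→0⁺} (f(x) − f(x−h))/h and Λ⁺f(x) := limsup_{h→0⁺} (f(x+h) − f(x))/h, both in the extended reals. -/
open Filter MeasureTheory

/-- Upper right Dini derivative, in the extended reals. -/
noncomputable def upperRightDini (f : ℝ → ℝ) (x : ℝ) : EReal :=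
  limsup (fun h => (((f (x + h) - f x) / h : ℝ) : EReal)) (nhdsWithin 0 (Set.Ioi 0))

/-- Lower left Dini derivative, in the extended reals. -/
noncomputable def lowerLeftDini (f : ℝ → ℝ) (x : ℝ) : EReal :=
  liminf (fun h => (((f x - f (x - h)) / h : ℝ) : EReal)) (nhdsWithin 0 (Set.Ioi 0))

/-! A monotone function is differentiable almost everywhere (Lebesgue), and at a point of
differentiability both one-sided difference quotients converge to the derivative, so all Dini
derivatives there coincide. -/

open Topology

section DifferenceQuotients

variable {f : ℝ → ℝ} {f' x : ℝ}

theorem HasDerivAt.tendsto_forward_diff_quot (hf : HasDerivAt f f' x) :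
    Tendsto (fun h => (f (x + h) - f x) / h) (𝓝[>] 0) (𝓝 f') := by
  simpa only [smul_eq_mul, inv_mul_eq_div] using hf.tendsto_slope_zero_right

theorem HasDerivAt.tendsto_backward_diff_quot (hf : HasDerivAt f f' x) :
    Tendsto (fun h => (f x - f (x - h)) / h) (𝓝[>] 0) (𝓝 f') := by
  have hneg : Tendsto Neg.neg (𝓝[>] (0 : ℝ)) (𝓝[<] 0) := by
    simpa using tendsto_neg_nhdsGT (a := (0 : ℝ))
  have hleft := hf.tendsto_slope_zero_left.comp hneg
  refine hleft.congr fun h => ?_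
  simp only [Function.comp_apply, smul_eq_mul, inv_neg, ← sub_eq_add_neg]
  rw [neg_mul, ← mul_neg, neg_sub, inv_mul_eq_div]

theorem upperRightDini_eq_of_hasDerivAt (hf : HasDerivAt f f' x) :
    upperRightDini f x = f' :=
  (EReal.tendsto_coe.2 hf.tendsto_forward_diff_quot).limsup_eq

theorem lowerLeftDini_eq_of_hasDerivAt (hf : HasDerivAt f f' x) :
    lowerLeftDini f x = f' :=
  (EReal.tendsto_coe.2 hf.tendsto_backward_diff_quot).liminf_eq

end DifferenceQuotients

theorem dini_mismatch_null_general (f : ℝ → ℝ) (hmono : Monotone f) :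
    volume {x : ℝ | lowerLeftDini f x < upperRightDini f x} = 0 := by
  refine measure_mono_null ?_ (ae_iff.1 hmono.ae_differentiableAt)
  intro x hx hdiff
  have hf := hdiff.hasDerivAt
  rw [Set.mem_ofPred_eq, lowerLeftDini_eq_of_hasDerivAt hf, upperRightDini_eq_of_hasDerivAt hf] at hx
  exact lt_irrefl _ hx

theorem dini_mismatch_null (f : ℝ → ℝ) (hcont : Continuous f) (hmono : Monotone f) :
    volume {x : ℝ | lowerLeftDini f x < upperRightDini f x} = 0 :=
  dini_mismatch_null_general f hmono
end

section
/- Let X ⊆ ℝ and 0 ≤ δ < 1. Suppose for every bounded open interval I we have μ*(X ∩ I) ≤ δ·|I|, where μ* is Lebesgue outer measure and |I| the length of I. Then μ*(X) = 0. -/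
/-!
By the Lebesgue density theorem, which in Besicovitch's form holds for arbitrary (not necessarily
measurable) sets, almost every point of `X` with respect to `volume` restricted to `X` has density `1`
in `X`; the hypothesis bounds the density of `X` in every ball by `δ < 1`, so that restriction is zero.
-/

open MeasureTheory Metric Filter Topology

theorem Besicovitch.measure_eq_zero_of_measure_inter_closedBall_le {β : Type*} [MetricSpace β]
    [SecondCountableTopology β] [MeasurableSpace β] [BorelSpace β] [HasBesicovitchCovering β]
    (μ : Measure β) [IsLocallyFiniteMeasure μ] {s : Set β} {c : ENNReal} (hc : c < 1)
    (h : ∀ x, ∀ r : ℝ, 0 < r → μ (s ∩ closedBall x r) ≤ c * μ (closedBall x r)) :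
    μ s = 0 := by
  by_contra hs
  have := ae_restrict_neBot.mpr hs
  obtain ⟨x, hx⟩ := (Besicovitch.ae_tendsto_measure_inter_div μ s).exists
  have hdensity : ∀ᶠ r in 𝓝[>] (0 : ℝ), μ (s ∩ closedBall x r) / μ (closedBall x r) ≤ c :=
    eventually_nhdsWithin_of_forall fun r hr => ENNReal.div_le_of_le_mul (h x r hr)
  exact (le_of_tendsto hx hdensity).not_gt hc

theorem Real.volume_inter_closedBall_le_of_forall_Ioo {X : Set ℝ} {δ : ℝ}
    (h : ∀ a b : ℝ, a < b → volume (X ∩ Set.Ioo a b) ≤ ENNReal.ofReal (δ * (b - a)))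
    (x : ℝ) {r : ℝ} (hr : 0 < r) :
    volume (X ∩ closedBall x r) ≤ ENNReal.ofReal δ * volume (closedBall x r) := by
  have hIoo : (X ∩ Set.Ioo (x - r) (x + r) : Set ℝ) =ᵐ[volume] (X ∩ closedBall x r : Set ℝ) := by
    rw [Real.closedBall_eq_Icc]
    exact (ae_eq_refl X).inter Ioo_ae_eq_Icc
  calc volume (X ∩ closedBall x r)
      = volume (X ∩ Set.Ioo (x - r) (x + r)) := (measure_congr hIoo).symm
    _ ≤ ENNReal.ofReal (δ * (x + r - (x - r))) := h _ _ (by linarith)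
    _ = ENNReal.ofReal δ * volume (closedBall x r) := by
      rw [Real.volume_closedBall, ← ENNReal.ofReal_mul' (by positivity)]
      ring_nf

theorem local_density_null_general (X : Set ℝ) (δ : ℝ) (hδ1 : δ < 1)
    (h : ∀ a b : ℝ, a < b →
      volume (X ∩ Set.Ioo a b) ≤ ENNReal.ofReal (δ * (b - a))) :
    volume X = 0 :=
  Besicovitch.measure_eq_zero_of_measure_inter_closedBall_le volume
    (ENNReal.ofReal_lt_one.mpr hδ1) (Real.volume_inter_closedBall_le_of_forall_Ioo h)

theorem local_density_null (X : Set ℝ) (δ : ℝ) (hδ0 : 0 ≤ δ) (hδ1 : δ < 1)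
    (h : ∀ a b : ℝ, a < b →
      volume (X ∩ Set.Ioo a b) ≤ ENNReal.ofReal (δ * (b - a))) :
    volume X = 0 :=
  local_density_null_general X δ hδ1 h
end
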